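/- arXiv:1909.12362 — 7 statements merged into one kernel-verified Lean document; each statement's English description precedes it below -/
import Mathlib

section
/- Consider the one-hidden-layer autoencoder f(z) = A φ(B z) with A ∈ ℝ^{k₀×k}, B ∈ ℝ^{k×k₀}, elementwise differentiable nonlinearity φ, trained on a single example x ∈ ℝ^{k₀} by gradient descent with learning rate γ on the loss L = ½‖x − Aφ(Bx)‖². If the initial weights satisfy A^(0) = x (a^(0))ᵀ and B^(0) = b^(0) xᵀ for some vectors a^(0), b^(0) ∈ ℝ^k, then for every step t, A^(t) = x (a^(t))ᵀ and B^(t) = b^(t) xᵀ for some vectors a^(t), b^(t) ∈ ℝ^k. -/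
/-!
The residual of a rank-one matrix `x aᵀ` on any input `v` is a multiple of `x`, namely
`x - x aᵀ v = (1 - a ⬝ᵥ v) x`, so the update of `A` is again of the form `x cᵀ`. The update of `B`
is `w xᵀ` for some vector `w`, whatever `w` is, so it preserves the form `b xᵀ`.
-/

namespace Matrix

variable {m n α : Type*} [Fintype n] [CommRing α]

theorem vecMulVec_mulVec_eq_smul (u : m → α) (v w : n → α) :
    vecMulVec u v *ᵥ w = (v ⬝ᵥ w) • u := by
  rw [vecMulVec_mulVec, op_smul_eq_smul]

theorem sub_vecMulVec_mulVec_self (x : m → α) (a v : n → α) :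
    x - vecMulVec x a *ᵥ v = (1 - a ⬝ᵥ v) • x := by
  rw [vecMulVec_mulVec_eq_smul, sub_smul, one_smul]

theorem vecMulVec_add_smul_vecMulVec_sub_mulVec (x : m → α) (a v : n → α) (γ : α) :
    vecMulVec x a + γ • vecMulVec (x - vecMulVec x a *ᵥ v) v =
      vecMulVec x (a + (γ * (1 - a ⬝ᵥ v)) • v) := by
  rw [sub_vecMulVec_mulVec_self, smul_vecMulVec, vecMulVec_add, vecMulVec_smul, smul_smul]

end Matrix

theorem rank_one_invariant_single_example_general {k0 k : ℕ}
    (φ : ℝ → ℝ) (γ : ℝ)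
    (x : Fin k0 → ℝ)
    (A : ℕ → Matrix (Fin k0) (Fin k) ℝ) (B : ℕ → Matrix (Fin k) (Fin k0) ℝ)
    (hA : ∀ t, A (t + 1) = A t + γ •
      Matrix.vecMulVec (x - (A t).mulVec fun i => φ (((B t).mulVec x) i))
        (fun i => φ (((B t).mulVec x) i)))
    (hB : ∀ t, B (t + 1) = B t + γ •
      Matrix.vecMulVec
        (fun i => deriv φ (((B t).mulVec x) i) *
          ((A t).transpose.mulVec (x - (A t).mulVec fun j => φ (((B t).mulVec x) j)) i))
        x)
    (a0 b0 : Fin k → ℝ)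
    (hA0 : A 0 = Matrix.vecMulVec x a0) (hB0 : B 0 = Matrix.vecMulVec b0 x) :
    ∀ t, ∃ a b : Fin k → ℝ, A t = Matrix.vecMulVec x a ∧ B t = Matrix.vecMulVec b x := by
  intro t
  induction t with
  | zero => exact ⟨a0, b0, hA0, hB0⟩
  | succ t ih =>
    obtain ⟨a, b, ha, hb⟩ := ih
    refine ⟨?a, ?b, (hA t).trans ?nextA, (hB t).trans ?nextB⟩
    case nextA => rw [ha, Matrix.vecMulVec_add_smul_vecMulVec_sub_mulVec]
    case nextB => rw [hb, ← Matrix.smul_vecMulVec, ← Matrix.add_vecMulVec]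

theorem rank_one_invariant_single_example {k0 k : ℕ}
    (φ : ℝ → ℝ) (hφ : Differentiable ℝ φ) (γ : ℝ)
    (x : Fin k0 → ℝ)
    (A : ℕ → Matrix (Fin k0) (Fin k) ℝ) (B : ℕ → Matrix (Fin k) (Fin k0) ℝ)
    (hA : ∀ t, A (t + 1) = A t + γ •
      Matrix.vecMulVec (x - (A t).mulVec fun i => φ (((B t).mulVec x) i))
        (fun i => φ (((B t).mulVec x) i)))
    (hB : ∀ t, B (t + 1) = B t + γ •
      Matrix.vecMulVec
        (fun i => deriv φ (((B t).mulVec x) i) *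
          ((A t).transpose.mulVec (x - (A t).mulVec fun j => φ (((B t).mulVec x) j)) i))
        x)
    (a0 b0 : Fin k → ℝ)
    (hA0 : A 0 = Matrix.vecMulVec x a0) (hB0 : B 0 = Matrix.vecMulVec b0 x) :
    ∀ t, ∃ a b : Fin k → ℝ, A t = Matrix.vecMulVec x a ∧ B t = Matrix.vecMulVec b x :=
  rank_one_invariant_single_example_general φ γ x A B hA hB a0 b0 hA0 hB0
end

section
/- Let x ∈ ℝ^{k₀} with ‖x‖₂ = 1, let k be fixed, and suppose the coordinates of a and b are constant: a_i = α, b_i = β for all i, with f(z) = x aᵀ φ(b xᵀ z). If k α φ(β) = 1, then f(x) = x and the largest (absolute value) eigenvalue of the Jacobian of f at x equals φ'(β)β/φ(β). -/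
theorem top_eigenvalue_constant_coordinates {k0 k : ℕ} (hk : 0 < k)
    (φ : ℝ → ℝ) (hφ : ContDiff ℝ (⊤ : ℕ∞) φ)
    (x : EuclideanSpace ℝ (Fin k0)) (hx : ‖x‖ = 1)
    (α β : ℝ) (hφβ : φ β ≠ 0)
    (hinterp : (k : ℝ) * α * φ β = 1)
    (f : EuclideanSpace ℝ (Fin k0) → EuclideanSpace ℝ (Fin k0))
    (hf : ∀ z, f z = ((k : ℝ) * α * φ (β * (inner ℝ x z : ℝ))) • x) :
    f x = x ∧
    Module.End.HasEigenvalue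
      ((fderiv ℝ f x).toLinearMap : Module.End ℝ (EuclideanSpace ℝ (Fin k0)))
      (deriv φ β * β / φ β) ∧
    (∀ μ : ℝ, Module.End.HasEigenvalue
      ((fderiv ℝ f x).toLinearMap : Module.End ℝ (EuclideanSpace ℝ (Fin k0))) μ →
      |μ| ≤ |deriv φ β * β / φ β|) := by
  have hxx : (inner ℝ x x : ℝ) = 1 := by
    rw [real_inner_self_eq_norm_sq, hx]; norm_num
  set c : ℝ := deriv φ β * β / φ β with hc
  have hx0 : x ≠ 0 := by
    intro h; rw [h, norm_zero] at hx; norm_num at hx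
  have hφd : Differentiable ℝ φ := hφ.differentiable (by simp)
  -- derivative of the inner linear map
  have hu : HasFDerivAt (fun z : EuclideanSpace ℝ (Fin k0) => β * (inner ℝ x z : ℝ))
      (β • (innerSL ℝ x : EuclideanSpace ℝ (Fin k0) →L[ℝ] ℝ)) x :=
    ((innerSL ℝ x).hasFDerivAt).const_mul β
  have hux : β * (inner ℝ x x : ℝ) = β := by rw [hxx]; ring
  have h1 : HasDerivAt φ (deriv φ β) (β * (inner ℝ x x : ℝ)) := by
    rw [hux]; exact (hφd β).hasDerivAt
  have hφu : HasFDerivAt (fun z : EuclideanSpace ℝ (Fin k0) => φ (β * (inner ℝ x z : ℝ)))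
      ((deriv φ β) • (β • (innerSL ℝ x : EuclideanSpace ℝ (Fin k0) →L[ℝ] ℝ))) x :=
    h1.comp_hasFDerivAt x hu
  have hh : HasFDerivAt
      (fun z : EuclideanSpace ℝ (Fin k0) => (k : ℝ) * α * φ (β * (inner ℝ x z : ℝ)))
      (((k : ℝ) * α) • ((deriv φ β) • (β • (innerSL ℝ x : EuclideanSpace ℝ (Fin k0) →L[ℝ] ℝ)))) x :=
    hφu.const_mul ((k : ℝ) * α)
  have hfeq : f = fun z => ((k : ℝ) * α * φ (β * (inner ℝ x z : ℝ))) • x := funext hf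
  have hF : HasFDerivAt f
      ((((k : ℝ) * α) • ((deriv φ β) • (β • (innerSL ℝ x : EuclideanSpace ℝ (Fin k0) →L[ℝ] ℝ)))).smulRight x) x := by
    rw [hfeq]; exact hh.smul_const x
  have hDf := hF.fderiv
  have hka : (k : ℝ) * α = (φ β)⁻¹ := by
    field_simp
    linarith [hinterp]
  have hL : ∀ v, (fderiv ℝ f x) v = (c * (inner ℝ x v : ℝ)) • x := by
    intro v
    rw [hDf]
    simp [ContinuousLinearMap.smulRight_apply, hka, hc]
    ring_nf
  have happ : ∀ v, ((fderiv ℝ f x).toLinearMap : Module.End ℝ (EuclideanSpace ℝ (Fin k0))) v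
      = (c * (inner ℝ x v : ℝ)) • x := fun v => hL v
  refine ⟨?_, ?_, ?_⟩
  · rw [hf x, hxx, mul_one, hinterp, one_smul]
  · apply Module.End.hasEigenvalue_of_hasEigenvector (x := x)
    constructor
    · rw [Module.End.mem_eigenspace_iff, happ, hxx, mul_one]
    · exact hx0
  · intro μ hμ
    obtain ⟨v, hv⟩ := hμ.exists_hasEigenvector
    have hv0 : v ≠ 0 := hv.right
    have heq : (c * (inner ℝ x v : ℝ)) • x = μ • v := by
      rw [← happ]; exact hv.apply_eq_smul
    by_cases hxv : (inner ℝ x v : ℝ) = 0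
    · have : μ • v = 0 := by rw [← heq, hxv, mul_zero, zero_smul]
      rcases smul_eq_zero.mp this with h | h
      · rw [h]; simp
      · exact absurd h hv0
    · have h2 := congrArg (fun w => (inner ℝ x w : ℝ)) heq
      simp only [inner_smul_right, hxx, mul_one] at h2
      have : c = μ := mul_right_cancel₀ hxv h2
      rw [← this]
end

section
/- Let x ∈ ℝ^{k₀} with ‖x‖₂ = 1, and let φ be a smooth nonlinearity such that there exists an open interval O ⊂ ℝ on which φ(β) ≠ 0 and |φ'(β)β/φ(β)| > 1 for all β ∈ O. Then there exist infinitely many pairs (a,b) ∈ ℝ^k × ℝ^k with constant coordinates such that f(z) = x aᵀ φ(b xᵀ z) satisfies f(x) = x but x is not an attractor of f. -/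
open Filter Topology

/-- A fixed point `p` of `f` is an attractor if iterates converge to `p`
on an open neighborhood of `p`. -/
def IsAttractor {E : Type*} [TopologicalSpace E] (f : E → E) (p : E) : Prop :=
  ∃ O : Set E, IsOpen O ∧ p ∈ O ∧ ∀ y ∈ O, Tendsto (fun n => f^[n] y) atTop (𝓝 p)

open Set in

lemma escape {G : ℝ → ℝ} {δ lam t : ℝ} (hδ : 0 < δ) (hlam : 1 < lam)
    (hexp : ∀ u ∈ Icc (1-δ) (1+δ), lam * |u - 1| ≤ |G u - 1|)
    (ht : Tendsto (fun n => G^[n] t) atTop (𝓝 1)) : ∃ N, G^[N] t = 1 := by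
  have h1 : ∀ᶠ n in atTop, |G^[n] t - 1| ≤ δ := by
    have := Metric.tendsto_nhds.1 ht δ hδ
    filter_upwards [this] with n hn
    rw [Real.dist_eq] at hn; linarith [hn.le]
  obtain ⟨N, hN⟩ := h1.exists_forall_of_atTop
  refine ⟨N, ?_⟩
  by_contra hs
  set s := G^[N] t with hsdef
  have hmem : ∀ j, |G^[j] s - 1| ≤ δ := by
    intro j
    have : G^[j] s = G^[N + j] t := by rw [hsdef, ← Function.iterate_add_apply, Nat.add_comm]
    rw [this]; exact hN _ (Nat.le_add_right _ _)
  have key : ∀ j, lam ^ j * |s - 1| ≤ |G^[j] s - 1| := by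
    intro j
    induction j with
    | zero => simp
    | succ j ih =>
      have hmemj : G^[j] s ∈ Icc (1-δ) (1+δ) := by
        have := hmem j
        constructor <;> [linarith [abs_le.1 this |>.1]; linarith [abs_le.1 this |>.2]]
      calc lam ^ (j+1) * |s - 1| = lam * (lam ^ j * |s - 1|) := by ring
        _ ≤ lam * |G^[j] s - 1| := by
            have : (0:ℝ) < lam := by linarith
            nlinarith
        _ ≤ |G (G^[j] s) - 1| := hexp _ hmemj
        _ = |G^[j+1] s - 1| := by rw [Function.iterate_succ_apply']
  have hs1 : 0 < |s - 1| := abs_pos.2 (sub_ne_zero.2 hs)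
  obtain ⟨j, hj⟩ := (tendsto_pow_atTop_atTop_of_one_lt hlam).eventually_ge_atTop
    ((δ + 1) / |s - 1|) |>.exists
  have := key j
  have := hmem j
  have : (δ + 1) ≤ lam ^ j * |s - 1| := by
    rw [div_le_iff₀ hs1] at hj; linarith
  linarith [key j, hmem j]

open Set in

lemma main_false {G : ℝ → ℝ} {δ lam ε : ℝ} (hG : Continuous G) (hδ : 0 < δ) (hlam : 1 < lam)
    (hε : 0 < ε) (hεδ : ε ≤ δ) (hG1 : G 1 = 1)
    (hexp : ∀ u ∈ Icc (1-δ) (1+δ), ∀ v ∈ Icc (1-δ) (1+δ), u ≤ v → lam * (v - u) ≤ G v - G u)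
    (hall : ∀ t ∈ Ioo (1-ε) (1+ε), ∃ N, G^[N] t = 1) : False := by
  set C : Set ℝ := {t | ∃ N, G^[N] t = 1} with hC
  have hone : (1:ℝ) ∈ C := ⟨0, rfl⟩
  have hinv : ∀ t ∈ C, G t ∈ C := by
    rintro t ⟨N, hN⟩
    exact ⟨N, by rw [← Function.iterate_succ_apply, Function.iterate_succ_apply', hN, hG1]⟩
  have hinvk : ∀ t ∈ C, ∀ m, G^[m] t ∈ C := by
    intro t ht m
    induction m with
    | zero => exact ht
    | succ m ih => rw [Function.iterate_succ_apply']; exact hinv _ ih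
  -- expansion from 1:
  have hgrow : ∀ u ∈ Icc (1:ℝ) (1+δ), 1 + lam * (u - 1) ≤ G u := by
    intro u hu
    have h1 : (1:ℝ) ∈ Icc (1-δ) (1+δ) := by constructor <;> linarith
    have h2 : u ∈ Icc (1-δ) (1+δ) := ⟨by linarith [hu.1], hu.2⟩
    have := hexp 1 h1 u h2 hu.1
    rw [hG1] at this; linarith
  -- preimage step within (1, 1+δ]
  have pre : ∀ u ∈ Ioc (1:ℝ) (1+δ), ∃ v ∈ Ioc (1:ℝ) (1+δ), G v = u ∧ v - 1 ≤ (u-1)/lam := by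
    intro u hu
    have hGu : u < G u := by
      have := hgrow u ⟨hu.1.le, hu.2⟩
      nlinarith [hu.1]
    have hsub : Icc (G 1) (G u) ⊆ G '' Icc 1 u :=
      intermediate_value_Icc hu.1.le hG.continuousOn
    obtain ⟨v, hv, hGv⟩ := hsub ⟨by rw [hG1]; exact hu.1.le, hGu.le⟩
    have hv1 : 1 < v := by
      rcases eq_or_lt_of_le hv.1 with h | h
      · exfalso; rw [← h, hG1] at hGv; exact absurd hGv.symm (ne_of_gt hu.1)
      · exact h
    refine ⟨v, ⟨hv1, le_trans hv.2 hu.2⟩, hGv, ?_⟩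
    have := hexp 1 (by constructor <;> linarith) v
      ⟨by linarith, le_trans hv.2 (le_trans hu.2 (le_refl _))⟩ hv1.le
    rw [hG1, hGv] at this
    rw [le_div_iff₀ (by linarith : (0:ℝ) < lam)]
    linarith
  -- backward orbit
  have back : ∀ m, ∀ u ∈ Ioc (1:ℝ) (1+δ), ∃ v ∈ Ioc (1:ℝ) (1+δ), G^[m] v = u ∧ v - 1 ≤ δ / lam ^ m := by
    intro m
    induction m with
    | zero => intro u hu; exact ⟨u, hu, rfl, by simpa using by linarith [hu.2]⟩
    | succ m ih =>
      intro u hu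
      obtain ⟨v, hv, hGv, hvb⟩ := ih u hu
      obtain ⟨w, hw, hGw, hwb⟩ := pre v hv
      refine ⟨w, hw, by rw [Function.iterate_succ_apply, hGw, hGv], ?_⟩
      have hlam0 : (0:ℝ) < lam := by linarith
      calc w - 1 ≤ (v-1)/lam := hwb
        _ ≤ (δ / lam ^ m)/lam := by gcongr
        _ = δ / lam ^ (m+1) := by rw [div_div, ← pow_succ]
  -- reachability: everything in (1, 1+δ] is in C
  have reachδ : ∀ u ∈ Ioc (1:ℝ) (1+δ), u ∈ C := by
    intro u hu
    have hlam0 : (0:ℝ) < lam := by linarith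
    obtain ⟨m, hm⟩ := exists_pow_lt_of_lt_one (div_pos hε hδ)
      (by rw [div_lt_one hlam0]; exact hlam : (1:ℝ)/lam < 1)
    have hp : (0:ℝ) < lam ^ m := pow_pos hlam0 m
    have hm' : δ / lam ^ m < ε := by
      rw [div_pow, one_pow, div_lt_div_iff₀ hp hδ] at hm
      rw [div_lt_iff₀ hp]; linarith
    obtain ⟨v, hv, hGv, hvb⟩ := back m u hu
    have hvmem : v ∈ Ioo (1-ε) (1+ε) := ⟨by linarith [hv.1], by linarith⟩
    exact hGv ▸ hinvk v (hall v hvmem) m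
  have reachB : ∀ w ∈ Ioc (1:ℝ) (G (1+δ)), w ∈ C := by
    intro w hw
    have hsub : Icc (G 1) (G (1+δ)) ⊆ G '' Icc 1 (1+δ) :=
      intermediate_value_Icc (by linarith) hG.continuousOn
    obtain ⟨u, hu, hGu⟩ := hsub ⟨by rw [hG1]; exact hw.1.le, hw.2⟩
    have hu1 : 1 < u := by
      rcases eq_or_lt_of_le hu.1 with h | h
      · exfalso; rw [← h, hG1] at hGu; exact absurd hGu (ne_of_lt hw.1)
      · exact h
    exact hGu ▸ hinv u (reachδ u ⟨hu1, hu.2⟩)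
  -- the increasing bound sequence
  set B0 : ℝ := G (1+δ) with hB0
  have hB0big : 1 + δ < B0 := by
    have := hgrow (1+δ) ⟨by linarith, le_refl _⟩
    nlinarith
  let b : ℕ → ℝ := fun n => Nat.rec B0 (fun _ bn => sSup (G '' Icc 1 bn)) n
  have hb0 : b 0 = B0 := rfl
  have hbsucc : ∀ n, b (n+1) = sSup (G '' Icc 1 (b n)) := fun n => rfl
  have hbbig : ∀ n, 1 + δ < b n := by
    intro n
    induction n with
    | zero => exact hB0big
    | succ n ih =>
      have hmem : B0 ∈ G '' Icc 1 (b n) := ⟨1+δ, ⟨by linarith, by linarith⟩, rfl⟩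
      have hbdd : BddAbove (G '' Icc 1 (b n)) := (isCompact_Icc.image hG).bddAbove
      have := le_csSup hbdd hmem
      rw [← hbsucc] at this
      linarith
  have hbC : ∀ n, Icc 1 (b n) ⊆ C := by
    intro n
    induction n with
    | zero =>
      intro t ht
      rcases eq_or_lt_of_le ht.1 with h | h
      · exact h ▸ hone
      · exact reachB t ⟨h, ht.2⟩
    | succ n ih =>
      have hKc : IsCompact (G '' Icc 1 (b n)) := isCompact_Icc.image hG
      have hKp : IsPreconnected (G '' Icc 1 (b n)) :=
        (isPreconnected_Icc).image G (hG.continuousOn)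
      have h1K : (1:ℝ) ∈ G '' Icc 1 (b n) := ⟨1, ⟨le_refl _, by linarith [hbbig n]⟩, hG1⟩
      have hbK : b (n+1) ∈ G '' Icc 1 (b n) := by
        rw [hbsucc]; exact hKc.sSup_mem ⟨1, h1K⟩
      intro t ht
      have : t ∈ G '' Icc 1 (b n) := hKp.Icc_subset h1K hbK ht
      obtain ⟨y, hy, hGy⟩ := this
      exact hGy ▸ hinv y (ih hy)
  have hfixfree : ∀ n, ∀ z ∈ Ioc (1:ℝ) (b n), G z ≠ z := by
    intro n z hz hGz
    obtain ⟨N, hN⟩ := hbC n ⟨hz.1.le, hz.2⟩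
    rw [Function.iterate_fixed hGz N] at hN
    exact absurd hN (ne_of_gt hz.1)
  have hgt : ∀ n, ∀ z ∈ Ioc (1:ℝ) (b n), z < G z := by
    intro n z hz
    by_contra h
    push_neg at h
    have hlt : G z < z := lt_of_le_of_ne h (hfixfree n z hz)
    have hδmem : (1+δ) ∈ Ioc (1:ℝ) (b n) := ⟨by linarith, (hbbig n).le⟩
    have hδpos : (1+δ) < G (1+δ) := by
      have := hgrow (1+δ) ⟨by linarith, le_refl _⟩
      nlinarith
    have hFcont : Continuous (fun t => G t - t) := hG.sub continuous_id
    have hsub := intermediate_value_uIcc (a := z) (b := 1+δ)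
      (f := fun t => G t - t) hFcont.continuousOn
    have h0 : (0:ℝ) ∈ uIcc (G z - z) (G (1+δ) - (1+δ)) := by
      rw [mem_uIcc]; left; constructor <;> linarith
    obtain ⟨c, hc, hFc⟩ := hsub h0
    have hcmem : c ∈ Ioc (1:ℝ) (b n) := by
      rw [mem_uIcc] at hc
      rcases hc with ⟨h1, h2⟩ | ⟨h1, h2⟩
      · exact ⟨lt_of_lt_of_le hz.1 h1, le_trans h2 hδmem.2⟩
      · exact ⟨lt_of_lt_of_le hδmem.1 h1, le_trans h2 hz.2⟩
    exact hfixfree n c hcmem (by dsimp at hFc; linarith)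
  -- the escaping orbit
  have ht0mem : (1 + ε/2) ∈ Ioo (1-ε) (1+ε) := ⟨by linarith, by linarith⟩
  have horb : ∀ j, G^[j] (1 + ε/2) ∈ Ioc (1:ℝ) (b j) := by
    intro j
    induction j with
    | zero =>
      simp only [Function.iterate_zero_apply]
      exact ⟨by linarith, by linarith [hbbig 0]⟩
    | succ j ih =>
      rw [Function.iterate_succ_apply']
      set s := G^[j] (1 + ε/2)
      refine ⟨lt_trans ih.1 (hgt j s ih), ?_⟩
      rw [hbsucc]
      exact le_csSup (isCompact_Icc.image hG).bddAbove ⟨s, ⟨ih.1.le, ih.2⟩, rfl⟩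
  obtain ⟨N, hN⟩ := hall (1 + ε/2) ht0mem
  have := (horb N).1
  rw [hN] at this
  exact lt_irrefl 1 this

open Set in
lemma not_attractor_1d {g : ℝ → ℝ} (hg : ContDiff ℝ 1 g) (hg1 : g 1 = 1)
    (hder : 1 < |deriv g 1|) :
    ∀ U ∈ 𝓝 (1:ℝ), ∃ t ∈ U, ¬ Tendsto (fun n => g^[n] t) atTop (𝓝 1) := by
  intro U hU
  by_contra hcon
  push_neg at hcon
  have hgdiff : Differentiable ℝ g := hg.differentiable one_ne_zero
  set G : ℝ → ℝ := g ∘ g with hGdef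
  have hGc : ContDiff ℝ 1 G := hg.comp hg
  have hG1 : G 1 = 1 := by simp [hGdef, hg1]
  have hGd1 : deriv G 1 = (deriv g 1)^2 := by
    rw [hGdef, deriv_comp 1 (hgdiff _) (hgdiff _), hg1]; ring
  set μ : ℝ := (deriv g 1)^2 with hμdef
  have hμ : 1 < μ := by
    have := sq_abs (deriv g 1)
    nlinarith
  set lam : ℝ := (1 + μ)/2 with hlamdef
  have hlam : 1 < lam := by rw [hlamdef]; linarith
  have hderivcont : Continuous (deriv G) := hGc.continuous_deriv le_rfl
  have hopen : IsOpen {s : ℝ | lam < deriv G s} := isOpen_lt continuous_const hderivcont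
  have h1mem : (1:ℝ) ∈ {s : ℝ | lam < deriv G s} := by
    simp only [mem_setOf_eq, hGd1]; rw [hlamdef]; linarith
  obtain ⟨δ0, hδ0, hball⟩ := Metric.isOpen_iff.1 hopen 1 h1mem
  set δ : ℝ := δ0/2 with hδdef
  have hδ : 0 < δ := by rw [hδdef]; linarith
  have hIcc_sub : Icc (1-δ) (1+δ) ⊆ Metric.ball 1 δ0 := by
    intro s hs
    rw [Metric.mem_ball, Real.dist_eq]
    rw [abs_lt]
    constructor <;> [linarith [hs.1]; linarith [hs.2]]
  have hexp : ∀ u ∈ Icc (1-δ) (1+δ), ∀ v ∈ Icc (1-δ) (1+δ), u ≤ v →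
      lam * (v - u) ≤ G v - G u := by
    apply Convex.mul_sub_le_image_sub_of_le_deriv (convex_Icc _ _)
      (hGc.continuous.continuousOn) (hGc.differentiable one_ne_zero).differentiableOn
    intro s hs
    exact (hball (hIcc_sub (interior_subset hs))).le
  have hexpabs : ∀ u ∈ Icc (1-δ) (1+δ), lam * |u - 1| ≤ |G u - 1| := by
    intro u hu
    have h1I : (1:ℝ) ∈ Icc (1-δ) (1+δ) := by constructor <;> linarith
    rcases le_total u 1 with h | h
    · have := hexp u hu 1 h1I h
      rw [hG1] at this
      rw [abs_of_nonpos (by linarith), abs_of_nonpos (by nlinarith)]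
      linarith
    · have := hexp 1 h1I u hu h
      rw [hG1] at this
      rw [abs_of_nonneg (by linarith), abs_of_nonneg (by nlinarith)]
      linarith
  obtain ⟨ε0, hε0, hballU⟩ := Metric.mem_nhds_iff.1 hU
  set ε : ℝ := min (ε0/2) δ with hεdef
  have hε : 0 < ε := lt_min (by linarith) hδ
  have hεδ : ε ≤ δ := min_le_right _ _
  refine main_false (G := G) hGc.continuous hδ hlam hε hεδ hG1 hexp ?_
  intro t ht
  have htU : t ∈ U := by
    apply hballU
    rw [Metric.mem_ball, Real.dist_eq, abs_lt]
    have h1 := ht.1; have h2 := ht.2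
    have : ε ≤ ε0/2 := min_le_left _ _
    constructor <;> linarith
  have htend := hcon t htU
  have htendG : Tendsto (fun n => G^[n] t) atTop (𝓝 1) := by
    have h2n : Tendsto (fun n : ℕ => 2*n) atTop atTop :=
      Filter.tendsto_atTop_atTop.2 fun b => ⟨b, fun a ha => by omega⟩
    have := htend.comp h2n
    convert this using 1
    funext n
    simp only [Function.comp_apply]
    rw [hGdef, show g ∘ g = g^[2] from by rw [Function.iterate_succ, Function.iterate_one],
      ← Function.iterate_mul]
  exact escape hδ hlam hexpabs htendG

theorem infinitely_many_non_attracting_interpolations {k0 k : ℕ} (hk : 0 < k)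
    (φ : ℝ → ℝ) (hφ : ContDiff ℝ (⊤ : ℕ∞) φ)
    (x : EuclideanSpace ℝ (Fin k0)) (hx : ‖x‖ = 1)
    (O : Set ℝ) (hO : IsOpen O) (hOne : O.Nonempty)
    (hcond : ∀ β ∈ O, φ β ≠ 0 ∧ 1 < |deriv φ β * β / φ β|) :
    {p : ℝ × ℝ |
      (fun z => (((k : ℝ) * p.1 * φ (p.2 * (inner ℝ x z : ℝ))) • x)) x = x ∧
      ¬ IsAttractor (fun z => (((k : ℝ) * p.1 * φ (p.2 * (inner ℝ x z : ℝ))) • x)) x}.Infinite := by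
  have hkR : (k:ℝ) ≠ 0 := Nat.cast_ne_zero.2 hk.ne'
  have hxx : (inner ℝ x x : ℝ) = 1 := by
    rw [real_inner_self_eq_norm_mul_norm, hx]; norm_num
  have hφd : Differentiable ℝ φ := hφ.differentiable (by simp)
  -- the image of O under β ↦ (1/(k φ β), β) is in the set
  have hsub : (fun β => ((1:ℝ)/((k:ℝ) * φ β), β)) '' O ⊆
      {p : ℝ × ℝ |
        (fun z => (((k : ℝ) * p.1 * φ (p.2 * (inner ℝ x z : ℝ))) • x)) x = x ∧
        ¬ IsAttractor (fun z => (((k : ℝ) * p.1 * φ (p.2 * (inner ℝ x z : ℝ))) • x)) x} := by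
    rintro _ ⟨β, hβ, rfl⟩
    obtain ⟨hφβ, hd⟩ := hcond β hβ
    set α : ℝ := (1:ℝ)/((k:ℝ) * φ β) with hαdef
    have hkα : (k:ℝ) * α * φ β = 1 := by
      rw [hαdef]; field_simp
    have hkα' : (k:ℝ) * α = 1 / φ β := by
      rw [hαdef]; field_simp
    set f : EuclideanSpace ℝ (Fin k0) → EuclideanSpace ℝ (Fin k0) :=
      fun z => (((k : ℝ) * α * φ (β * (inner ℝ x z : ℝ))) • x) with hfdef
    set g : ℝ → ℝ := fun t => (k:ℝ) * α * φ (β * t) with hgdef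
    have hg1 : g 1 = 1 := by rw [hgdef]; simp only [mul_one]; exact hkα
    have hgC : ContDiff ℝ 1 g := by
      rw [hgdef]
      exact contDiff_const.mul ((hφ.of_le (by simp)).comp (contDiff_const.mul contDiff_id))
    have hderiv1 : HasDerivAt (fun t : ℝ => β * t) β 1 := by
      simpa using (hasDerivAt_id (1:ℝ)).const_mul β
    have hderiv2 : HasDerivAt (fun t => φ (β * t)) (deriv φ β * β) 1 := by
      have := ((hφd (β*1)).hasDerivAt).comp 1 hderiv1
      simp only [mul_one] at this; exact this
    have hderiv3 : HasDerivAt g ((k:ℝ) * α * (deriv φ β * β)) 1 := by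
      rw [hgdef]; exact hderiv2.const_mul _
    have hgd : deriv g 1 = deriv φ β * β / φ β := by
      rw [hderiv3.deriv, hkα']; ring
    have habs : 1 < |deriv g 1| := by rw [hgd]; exact hd
    have hiter : ∀ (t : ℝ) (n : ℕ), f^[n] (t • x) = (g^[n] t) • x := by
      intro t n
      induction n generalizing t with
      | zero => simp
      | succ n ih =>
        rw [Function.iterate_succ_apply, Function.iterate_succ_apply]
        have hfx : f (t • x) = (g t) • x := by
          rw [hfdef, hgdef]
          simp only [real_inner_smul_right, hxx, mul_one]
        rw [hfx, ih]
    constructor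
    · show ((k : ℝ) * α * φ (β * (inner ℝ x x : ℝ))) • x = x
      rw [hxx, mul_one, hkα, one_smul]
    · rintro ⟨U, hUopen, hxU, hconv⟩
      have hιcont : Continuous (fun t : ℝ => t • x) := continuous_id.smul continuous_const
      have hVopen : IsOpen ((fun t : ℝ => t • x) ⁻¹' U) := hUopen.preimage hιcont
      have h1V : (1:ℝ) ∈ (fun t : ℝ => t • x) ⁻¹' U := by
        simp only [Set.mem_preimage, one_smul]; exact hxU
      obtain ⟨t, htV, hnot⟩ := not_attractor_1d hgC hg1 habs _ (hVopen.mem_nhds h1V)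
      apply hnot
      have htend : Tendsto (fun n => f^[n] (t • x)) atTop (𝓝 x) := hconv (t • x) htV
      have hψ : Continuous (fun z : EuclideanSpace ℝ (Fin k0) => (inner ℝ x z : ℝ)) :=
        continuous_const.inner continuous_id
      have := (hψ.tendsto x).comp htend
      simp only [Function.comp_def, hiter, real_inner_smul_right, hxx, mul_one] at this
      exact this
  -- O is infinite
  have hOinf : O.Infinite := by
    obtain ⟨β₀, hβ₀⟩ := hOne
    obtain ⟨r, hr, hball⟩ := Metric.isOpen_iff.1 hO β₀ hβ₀
    have h1 : (Set.Ioo (β₀ - r) (β₀ + r)).Infinite := Set.Ioo_infinite (by linarith)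
    apply h1.mono
    rw [← Real.ball_eq_Ioo]; exact hball
  have hinj : Set.InjOn (fun β => ((1:ℝ)/((k:ℝ) * φ β), β)) O := by
    intro a _ b _ h
    exact congrArg Prod.snd h
  exact ((hOinf.image hinj).mono hsub)
end

section
/- Consider scalar gradient flow dynamics for a one-hidden-layer autoencoder with all coordinates equal: da/dt = (1 − k a φ(b)) φ(b) and db/dt = φ'(b) a (1 − k a φ(b)), with a(0) = a₀, b(0) = b₀, where φ is differentiable with φ'(z) ≠ 0 everywhere. Then along any solution, the conserved relation (a(t)² − a₀²)/2 = ∫_{b₀}^{b(t)} φ(z)/φ'(z) dz holds for all t ≥ 0. -/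
/-!
Along the flow, `d/dt (a²/2) = a ȧ = φ(b) · a (1 - k a φ(b)) = g(b) ḃ` with `g = φ / φ'`, so the
relation is the substitution `z = b(t)` in `∫ g`. As a mere derivative, `φ'` may be discontinuous,
so `g` need not be continuous (its integrability along the range of `b` has to come from the flow
itself) and the textbook substitution rule does not apply. What makes it work is that `g(b) ḃ` is
continuous. Where it does not vanish, `ḃ ≠ 0` nearby, so `b` is locally strictly monotone by
Darboux's theorem and the monotone substitution rule applies. Where it vanishes, the area formula
for `b` gives `|∫_{b s}^{b t} g| ≤ |∫_s^t |g(b) ḃ||`, which forces the derivative of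
`t ↦ ∫_{b s}^{b t} g` to be `0` as well.
-/

open MeasureTheory Set intervalIntegral
open scoped Interval ENNReal

theorem volume_image_le_lintegral_abs_deriv {f f' : ℝ → ℝ} {s : Set ℝ} (hs : MeasurableSet s)
    (hf : ∀ x ∈ s, HasDerivWithinAt f (f' x) s x) :
    volume (f '' s) ≤ ∫⁻ x in s, ENNReal.ofReal |f' x| := by
  simpa [ContinuousLinearMap.smulRight_one_eq_toSpanSingleton,
    ContinuousLinearMap.det_toSpanSingleton] using
    addHaar_image_le_lintegral_abs_det_fderiv volume hs fun x hx => (hf x hx).hasFDerivWithinAt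

section

variable {f f' g : ℝ → ℝ}

theorem lintegral_image_le_lintegral_abs_deriv_mul (hf : ∀ x, HasDerivAt f (f' x) x)
    {s : Set ℝ} (hs : MeasurableSet s) {w : ℝ → ℝ≥0∞} (hw : Measurable w) :
    ∫⁻ y in f '' s, w y ≤ ∫⁻ x in s, ENNReal.ofReal |f' x| * w (f x) := by
  have hfm : Measurable f :=
    (continuous_iff_continuousAt.2 fun x => (hf x).continuousAt).measurable
  have hf'm : Measurable fun x => ENNReal.ofReal |f' x| := by
    have : f' = deriv f := funext fun x => (hf x).deriv.symm
    exact ENNReal.measurable_ofReal.comp (this ▸ measurable_deriv f).abs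
  set ν := (volume.restrict s).withDensity fun x => ENNReal.ofReal |f' x|
  have hle : volume.restrict (f '' s) ≤ ν.map f := by
    refine Measure.le_iff.2 fun B hB => ?_
    rw [Measure.map_apply hfm hB, Measure.restrict_apply hB, withDensity_apply _ (hfm hB),
      Measure.restrict_restrict (hfm hB), inter_comm B, ← image_inter_preimage,
      inter_comm (f ⁻¹' B)]
    exact volume_image_le_lintegral_abs_deriv (hs.inter (hfm hB))
      fun x _ => (hf x).hasDerivWithinAt
  calc ∫⁻ y in f '' s, w y ≤ ∫⁻ y, w y ∂(ν.map f) := lintegral_mono' hle le_rfl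
    _ = ∫⁻ x in s, ENNReal.ofReal |f' x| * w (f x) := by
      rw [lintegral_map hw hfm]
      exact lintegral_withDensity_eq_lintegral_mul _ hf'm (hw.comp hfm)

theorem lintegral_image_le_lintegral_enorm_comp_mul_deriv (hf : ∀ x, HasDerivAt f (f' x) x)
    {s : Set ℝ} (hs : MeasurableSet s) (hg : Measurable g) :
    ∫⁻ y in f '' s, ‖g y‖ₑ ≤ ∫⁻ x in s, ‖g (f x) * f' x‖ₑ := by
  refine (lintegral_image_le_lintegral_abs_deriv_mul hf hs hg.enorm).trans_eq ?_
  refine lintegral_congr fun x => ?_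
  rw [enorm_mul, mul_comm, Real.enorm_eq_ofReal_abs, Real.enorm_eq_ofReal_abs]

theorem integrableOn_image_of_integrableOn_comp_mul_deriv (hf : ∀ x, HasDerivAt f (f' x) x)
    {s : Set ℝ} (hs : MeasurableSet s) (hg : Measurable g)
    (hgf : IntegrableOn (fun x => g (f x) * f' x) s) : IntegrableOn g (f '' s) :=
  ⟨hg.aestronglyMeasurable,
    (lintegral_image_le_lintegral_enorm_comp_mul_deriv hf hs hg).trans_lt hgf.2⟩

theorem integral_image_abs_le_integral_abs_comp_mul_deriv (hf : ∀ x, HasDerivAt f (f' x) x)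
    {s : Set ℝ} (hs : MeasurableSet s) (hg : Measurable g)
    (hgf : IntegrableOn (fun x => g (f x) * f' x) s) :
    ∫ y in f '' s, |g y| ≤ ∫ x in s, |g (f x) * f' x| := by
  rw [← ENNReal.ofReal_le_ofReal_iff (integral_nonneg fun _ => abs_nonneg _),
    ofReal_integral_eq_lintegral_ofReal
      (integrableOn_image_of_integrableOn_comp_mul_deriv hf hs hg hgf).abs
      (.of_forall fun _ => abs_nonneg _),
    ofReal_integral_eq_lintegral_ofReal hgf.abs (.of_forall fun _ => abs_nonneg _)]
  simpa only [Real.enorm_eq_ofReal_abs] using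
    lintegral_image_le_lintegral_enorm_comp_mul_deriv hf hs hg

theorem uIcc_subset_image_uIcc (hf : Continuous f) (a b : ℝ) : [[f a, f b]] ⊆ f '' [[a, b]] :=
  (isPreconnected_uIcc.image f hf.continuousOn).ordConnected.uIcc_subset
    (mem_image_of_mem f left_mem_uIcc) (mem_image_of_mem f right_mem_uIcc)

theorem intervalIntegrable_of_integrableOn_comp_mul_deriv (hf : ∀ x, HasDerivAt f (f' x) x)
    (hg : Measurable g) {a b : ℝ} (hgf : IntegrableOn (fun x => g (f x) * f' x) [[a, b]]) :
    IntervalIntegrable g volume (f a) (f b) :=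
  intervalIntegrable_iff.2 <|
    (integrableOn_image_of_integrableOn_comp_mul_deriv hf measurableSet_uIcc hg hgf).mono_set <|
      uIoc_subset_uIcc.trans <| uIcc_subset_image_uIcc
        (continuous_iff_continuousAt.2 fun x => (hf x).continuousAt) a b

theorem abs_integral_le_abs_integral_abs_comp_mul_deriv (hf : ∀ x, HasDerivAt f (f' x) x)
    (hg : Measurable g) {a b : ℝ} (hgf : IntegrableOn (fun x => g (f x) * f' x) [[a, b]]) :
    |∫ y in f a..f b, g y| ≤ |(∫ x in a..b, |g (f x) * f' x|)| := by
  have himage : Ι (f a) (f b) ⊆ f '' [[a, b]] := uIoc_subset_uIcc.trans <|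
    uIcc_subset_image_uIcc (continuous_iff_continuousAt.2 fun x => (hf x).continuousAt) a b
  calc |∫ y in f a..f b, g y| ≤ ∫ y in Ι (f a) (f b), |g y| := by
        simpa only [Real.norm_eq_abs] using
          norm_integral_le_integral_norm_uIoc (f := g) (μ := volume)
    _ ≤ ∫ y in f '' [[a, b]], |g y| :=
        setIntegral_mono_set
          (integrableOn_image_of_integrableOn_comp_mul_deriv hf measurableSet_uIcc hg hgf).abs
          (.of_forall fun _ => abs_nonneg _) himage.eventuallyLE
    _ ≤ ∫ x in [[a, b]], |g (f x) * f' x| :=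
        integral_image_abs_le_integral_abs_comp_mul_deriv hf measurableSet_uIcc hg hgf
    _ = |(∫ x in a..b, |g (f x) * f' x|)| := by
        rw [abs_integral_eq_abs_integral_uIoc,
          abs_of_nonneg (integral_nonneg fun _ => abs_nonneg _), uIcc, uIoc,
          integral_Icc_eq_integral_Ioc]

theorem integral_comp_mul_deriv_of_deriv_ne_zero (hf : ∀ x, HasDerivAt f (f' x) x) {a b : ℝ}
    (hf' : ∀ x ∈ [[a, b]], f' x ≠ 0) :
    ∫ x in a..b, g (f x) * f' x = ∫ y in f a..f b, g y := by
  wlog hab : a ≤ b generalizing a b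
  · rw [integral_symm, this (uIcc_comm a b ▸ hf') (le_of_not_ge hab), integral_symm, neg_neg]
  have hfc : ContinuousOn f (Icc a b) :=
    (continuous_iff_continuousAt.2 fun x => (hf x).continuousAt).continuousOn
  have hderiv : ∀ x ∈ interior (Icc a b), HasDerivWithinAt f (f' x) (interior (Icc a b)) x :=
    fun x _ => (hf x).hasDerivWithinAt
  simp only [mul_comm _ (f' _), ← smul_eq_mul]
  rw [integral_of_le hab, ← integral_Icc_eq_integral_Ioc]
  rcases hasDerivWithinAt_forall_lt_or_forall_gt_of_forall_ne (convex_Icc a b)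
    (fun x _ => (hf x).hasDerivWithinAt) (uIcc_of_le hab ▸ hf') with hneg | hpos
  · have hfba : f b ≤ f a := antitoneOn_of_hasDerivWithinAt_nonpos (convex_Icc a b) hfc hderiv
      (fun x hx => (hneg x (interior_subset hx)).le) (left_mem_Icc.2 hab) (right_mem_Icc.2 hab) hab
    rw [integral_Icc_deriv_smul_of_deriv_nonpos hfc (fun x _ => hf x)
      (fun x hx => (hneg x (Ioo_subset_Icc_self hx)).le) hab, integral_symm,
      integral_of_le hfba, integral_Icc_eq_integral_Ioc]
  · have hfab : f a ≤ f b := monotoneOn_of_hasDerivWithinAt_nonneg (convex_Icc a b) hfc hderiv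
      (fun x hx => (hpos x (interior_subset hx)).le) (left_mem_Icc.2 hab) (right_mem_Icc.2 hab) hab
    rw [integral_Icc_deriv_smul_of_deriv_nonneg hfc (fun x _ => hf x)
      (fun x hx => (hpos x (Ioo_subset_Icc_self hx)).le) hab,
      integral_of_le hfab, integral_Icc_eq_integral_Ioc]

theorem hasDerivAt_integral_comp_of_continuous_comp_mul_deriv (hf : ∀ x, HasDerivAt f (f' x) x)
    (hg : Measurable g) (hc : Continuous fun x => g (f x) * f' x) (a x₀ : ℝ) :
    HasDerivAt (fun x => ∫ y in f a..f x, g y) (g (f x₀) * f' x₀) x₀ := by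
  set h := fun x => g (f x) * f' x
  have hint : ∀ u v, IntervalIntegrable g volume (f u) (f v) := fun u v =>
    intervalIntegrable_of_integrableOn_comp_mul_deriv hf hg hc.integrableOn_uIcc
  suffices HasDerivAt (fun x => ∫ y in f x₀..f x, g y) (h x₀) x₀ by
    refine (this.const_add (∫ y in f a..f x₀, g y)).congr_of_eventuallyEq
      (.of_forall fun x => ?_)
    exact (integral_add_adjacent_intervals (hint a x₀) (hint x₀ x)).symm
  by_cases h0 : h x₀ = 0
  · have hW : HasDerivAt (fun x => ∫ t in x₀..x, |h t|) 0 x₀ := by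
      simpa [h0] using integral_hasDerivAt_right (hc.abs.intervalIntegrable x₀ x₀)
        (hc.abs.stronglyMeasurableAtFilter _ _) hc.abs.continuousAt
    rw [hasDerivAt_iff_isLittleO] at hW
    rw [h0, hasDerivAt_iff_isLittleO]
    simp only [integral_same, sub_zero, smul_zero] at hW ⊢
    refine (Asymptotics.IsBigO.of_bound 1 (.of_forall fun x => ?_)).trans_isLittleO hW
    rw [one_mul, Real.norm_eq_abs, Real.norm_eq_abs]
    exact abs_integral_le_abs_integral_abs_comp_mul_deriv hf hg hc.integrableOn_uIcc
  · have hFTC : HasDerivAt (fun x => ∫ t in x₀..x, h t) (h x₀) x₀ :=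
      integral_hasDerivAt_right (hc.intervalIntegrable _ _) (hc.stronglyMeasurableAtFilter _ _)
        hc.continuousAt
    obtain ⟨ε, hε, hball⟩ := Metric.mem_nhds_iff.1 <|
      (hc.isOpen_preimage _ isOpen_ne).mem_nhds h0
    refine hFTC.congr_of_eventuallyEq <|
      Filter.eventually_of_mem (Metric.ball_mem_nhds x₀ hε) fun x hx => ?_
    refine (integral_comp_mul_deriv_of_deriv_ne_zero hf fun y hy => ?_).symm
    exact right_ne_zero_of_mul <| hball <|
      (convex_ball x₀ ε).ordConnected.uIcc_subset (Metric.mem_ball_self hε) hx hy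

theorem integral_comp_mul_deriv_of_continuous_comp_mul_deriv (hf : ∀ x, HasDerivAt f (f' x) x)
    (hg : Measurable g) (hc : Continuous fun x => g (f x) * f' x) (a b : ℝ) :
    ∫ x in a..b, g (f x) * f' x = ∫ y in f a..f b, g y := by
  rw [integral_eq_sub_of_hasDerivAt
    (fun x _ => hasDerivAt_integral_comp_of_continuous_comp_mul_deriv hf hg hc a x)
    (hc.intervalIntegrable a b), integral_same, sub_zero]

end

theorem gradient_flow_conserved_relation (k : ℕ)
    (φ : ℝ → ℝ) (hφ : Differentiable ℝ φ) (hφ' : ∀ z, deriv φ z ≠ 0)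
    (a b : ℝ → ℝ)
    (ha : ∀ t, HasDerivAt a ((1 - (k : ℝ) * a t * φ (b t)) * φ (b t)) t)
    (hb : ∀ t, HasDerivAt b (deriv φ (b t) * a t * (1 - (k : ℝ) * a t * φ (b t))) t) :
    ∀ t ≥ (0 : ℝ), (a t ^ 2 - a 0 ^ 2) / 2 = ∫ z in (b 0)..(b t), φ z / deriv φ z := by
  intro t _
  set energyRate := fun s => a s * ((1 - k * a s * φ (b s)) * φ (b s))
  have hcancel : ∀ s, φ (b s) / deriv φ (b s) * (deriv φ (b s) * a s * (1 - k * a s * φ (b s)))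
      = energyRate s := fun s => by
    simp only [energyRate]
    field_simp [hφ' (b s)]
  have hsq : ∀ s, HasDerivAt (fun s => a s ^ 2 / 2) (energyRate s) s := fun s =>
    ((ha s).pow 2).div_const 2 |>.congr_deriv (by ring)
  have hcont : Continuous energyRate := by
    have := hφ.continuous
    have := continuous_iff_continuousAt.2 fun s => (ha s).continuousAt
    have := continuous_iff_continuousAt.2 fun s => (hb s).continuousAt
    fun_prop
  rw [← integral_comp_mul_deriv_of_continuous_comp_mul_deriv (g := fun z => φ z / deriv φ z) hb
      (hφ.continuous.measurable.div (measurable_deriv φ)) (by simpa only [hcancel] using hcont),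
    integral_congr fun s _ => hcancel s,
    integral_eq_sub_of_hasDerivAt (fun s _ => hsq s) (hcont.intervalIntegrable _ _)]
  ring
end

section
/- Let φ(z) = e^{2z} and consider scalar gradient flow da/dt = (1 − kaφ(b))φ(b), db/dt = φ'(b)a(1 − kaφ(b)) with a(0) = b(0) = 0, where trajectories converge to a solution with 1 − kaφ(b) = 0. Then the conserved quantity gives a² = b at the fixed point, and the limit point (a*, b*) satisfies √(b*) e^{2b*} = 1/k, with the top Jacobian eigenvalue of the learned map at the training example equal to 2b*. Moreover, b* is strictly decreasing as a function of k, so the eigenvalue 2b* decreases with increasing width k. -/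
open Filter Topology Real

theorem exp_flow_limit_point (k : ℕ) (hk : 1 ≤ k) (a b : ℝ → ℝ)
    (ha : ∀ t, HasDerivAt a
      ((1 - (k : ℝ) * a t * Real.exp (2 * b t)) * Real.exp (2 * b t)) t)
    (hb : ∀ t, HasDerivAt b
      ((2 * Real.exp (2 * b t)) * a t * (1 - (k : ℝ) * a t * Real.exp (2 * b t))) t)
    (ha0 : a 0 = 0) (hb0 : b 0 = 0)
    (astar bstar : ℝ)
    (haconv : Tendsto a atTop (𝓝 astar)) (hbconv : Tendsto b atTop (𝓝 bstar))
    (hfix : 1 - (k : ℝ) * astar * Real.exp (2 * bstar) = 0) :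
    astar ^ 2 = bstar ∧
    Real.sqrt bstar * Real.exp (2 * bstar) = 1 / (k : ℝ) ∧
    deriv (fun z => Real.exp (2 * z)) bstar * bstar / Real.exp (2 * bstar) = 2 * bstar ∧
    (∀ (k' : ℕ) (b' : ℝ), k < k' → 0 < b' →
      Real.sqrt b' * Real.exp (2 * b') = 1 / (k' : ℝ) → b' < bstar) := by
  have hkpos : (0 : ℝ) < (k : ℝ) := by exact_mod_cast hk
  -- conserved quantity: a t ^ 2 - b t is constant
  have hconst : ∀ t : ℝ, a t ^ 2 - b t = 0 := by
    have hder : ∀ t : ℝ, HasDerivAt (fun t => a t ^ 2 - b t) 0 t := by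
      intro t
      have h1 : HasDerivAt (fun t => a t ^ 2)
          (2 * a t * ((1 - (k : ℝ) * a t * Real.exp (2 * b t)) * Real.exp (2 * b t))) t := by
        simpa [mul_comm, mul_assoc, Pi.pow_def] using ((ha t).pow 2)
      have := h1.fun_sub (hb t)
      exact this.congr_deriv (by ring)
    have : ∀ t : ℝ, a t ^ 2 - b t = a 0 ^ 2 - b 0 := by
      intro t
      exact is_const_of_deriv_eq_zero (fun t => (hder t).differentiableAt)
        (fun x => (hder x).deriv) t 0
    intro t
    simp [this t, ha0, hb0]
  have hconst' : ∀ t : ℝ, a t ^ 2 = b t := fun t => by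
    have := hconst t; linarith
  have h1 : astar ^ 2 = bstar := by
    have hl : Tendsto (fun t => a t ^ 2) atTop (𝓝 (astar ^ 2)) := haconv.pow 2
    have hl' : Tendsto (fun t => a t ^ 2) atTop (𝓝 bstar) := by
      simpa [hconst'] using hbconv
    exact tendsto_nhds_unique hl hl'
  have hexp : (0:ℝ) < Real.exp (2 * bstar) := Real.exp_pos _
  have hastar : astar = 1 / ((k : ℝ) * Real.exp (2 * bstar)) := by
    field_simp
    nlinarith [hfix]
  have hapos : 0 < astar := by
    rw [hastar]; positivity
  have hsqrt : Real.sqrt bstar = astar := by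
    rw [← h1, Real.sqrt_sq hapos.le]
  have h2 : Real.sqrt bstar * Real.exp (2 * bstar) = 1 / (k : ℝ) := by
    rw [hsqrt, hastar]
    field_simp
  have h3 : deriv (fun z => Real.exp (2 * z)) bstar * bstar / Real.exp (2 * bstar)
      = 2 * bstar := by
    have : deriv (fun z => Real.exp (2 * z)) bstar = 2 * Real.exp (2 * bstar) := by
      have h : HasDerivAt (fun z : ℝ => Real.exp (2 * z)) (Real.exp (2 * bstar) * 2) bstar := by
        simpa [Function.comp_def] using (Real.hasDerivAt_exp (2 * bstar)).comp bstar
          ((hasDerivAt_id bstar).const_mul 2)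
      rw [h.deriv]; ring
    rw [this]
    field_simp
  refine ⟨h1, h2, h3, ?_⟩
  intro k' b' hkk' hb' hb'eq
  have hbpos : 0 < bstar := by
    rw [← h1]; positivity
  by_contra hcon
  push_neg at hcon
  have hmono : Real.sqrt bstar * Real.exp (2 * bstar) ≤ Real.sqrt b' * Real.exp (2 * b') := by
    apply mul_le_mul (Real.sqrt_le_sqrt hcon) (Real.exp_le_exp.2 (by linarith))
      hexp.le (Real.sqrt_nonneg _)
  rw [h2, hb'eq] at hmono
  have hk'pos : (0:ℝ) < (k' : ℝ) := by
    exact_mod_cast lt_of_le_of_lt (Nat.zero_le k) hkk'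
  have : (k : ℝ) < (k' : ℝ) := by exact_mod_cast hkk'
  have := one_div_lt_one_div_of_lt hkpos this
  linarith
end

section
/- Let x^(1), ..., x^(n) ∈ ℝ^{k₀} be unit-norm vectors and let f_i(z) = x^((i mod n)+1) (u^(i))ᵀ φ(v^(i) (x^(i))ᵀ z) be rank-one one-hidden-layer networks satisfying (u^(i))ᵀ φ(v^(i)) = 1 and having constant coordinates u^(i)_j = α_i, v^(i)_j = β_i. Then the composition f = f_n ∘ f_{n−1} ∘ ⋯ ∘ f_1 satisfies f(x^(1)) = x^(1), and the Jacobian of f at x^(1) equals x^(1) (∏_{i=1}^n φ'(β_i)β_i/φ(β_i)) (x^(1))ᵀ; hence its top eigenvalue is ∏_{i=1}^n φ'(β_i)β_i/φ(β_i). -/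
open Fin.NatCast

/-- Iterated composition `f (m-1) ∘ ⋯ ∘ f 0`. -/
def iterCompAux {E : Type*} (f : ℕ → E → E) : ℕ → E → E
  | 0 => id
  | (m + 1) => f m ∘ iterCompAux f m

theorem foldl_ofFn_take_eq_iterCompAux {E : Type*} {n : ℕ} [NeZero n] (f : Fin n → E → E) :
    ∀ m, m ≤ n →
      ((List.ofFn f).take m).foldl (fun g fi => fi ∘ g) id
        = iterCompAux (fun j => f ((j : ℕ) : Fin n)) m := by
  intro m
  induction m with
  | zero => intro _; simp [iterCompAux]
  | succ m ih =>
    intro hm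
    have hm' : m < n := hm
    have hlen : m < (List.ofFn f).length := by simpa using hm'
    have htake : (List.ofFn f).take (m + 1)
        = (List.ofFn f).take m ++ [(List.ofFn f)[m]] := by
      rw [List.take_succ]
      simp [List.getElem?_eq_getElem hlen]
    have hget : (List.ofFn f)[m] = f ((m : ℕ) : Fin n) := by
      have hmk : ((m : ℕ) : Fin n) = ⟨m, hm'⟩ := Fin.ext (Fin.val_cast_of_lt hm')
      rw [List.getElem_ofFn, hmk]
    rw [htake, List.foldl_append, ih (le_of_lt hm'), hget]
    rfl

theorem sequence_encoder_composition_jacobian {k0 k n : ℕ} [NeZero n] (hk : 0 < k)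
    (φ : ℝ → ℝ) (hφ : ContDiff ℝ (⊤ : ℕ∞) φ)
    (x : Fin n → EuclideanSpace ℝ (Fin k0)) (hx : ∀ i, ‖x i‖ = 1)
    (α β : Fin n → ℝ) (hφβ : ∀ i, φ (β i) ≠ 0)
    (hinterp : ∀ i, (k : ℝ) * α i * φ (β i) = 1)
    (f : Fin n → EuclideanSpace ℝ (Fin k0) → EuclideanSpace ℝ (Fin k0))
    (hf : ∀ i z, f i z = ((k : ℝ) * α i * φ (β i * (inner ℝ (x i) z : ℝ))) • x (i + 1))
    (F : EuclideanSpace ℝ (Fin k0) → EuclideanSpace ℝ (Fin k0))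
    (hF : F = (List.ofFn f).foldl (fun g fi => fi ∘ g) id) :
    F (x 0) = x 0 ∧
    (∀ z, fderiv ℝ F (x 0) z =
      ((∏ i, deriv φ (β i) * β i / φ (β i)) * (inner ℝ (x 0) z : ℝ)) • x 0) ∧
    Module.End.HasEigenvalue
      ((fderiv ℝ F (x 0)).toLinearMap : Module.End ℝ (EuclideanSpace ℝ (Fin k0)))
      (∏ i, deriv φ (β i) * β i / φ (β i)) ∧
    (∀ μ : ℝ, Module.End.HasEigenvalue
      ((fderiv ℝ F (x 0)).toLinearMap : Module.End ℝ (EuclideanSpace ℝ (Fin k0))) μ →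
      |μ| ≤ |∏ i, deriv φ (β i) * β i / φ (β i)|) := by
  obtain ⟨c, hc⟩ : ∃ c : Fin n → ℝ, ∀ i, c i = deriv φ (β i) * β i / φ (β i) :=
    ⟨_, fun _ => rfl⟩
  have hPc : (∏ i, deriv φ (β i) * β i / φ (β i)) = ∏ i, c i :=
    Finset.prod_congr rfl (fun i _ => (hc i).symm)
  rw [hPc]
  -- inner self = 1
  have hself : ∀ i : Fin n, (inner ℝ (x i) (x i) : ℝ) = 1 := by
    intro i
    rw [real_inner_self_eq_norm_sq, hx i]; norm_num
  -- value of each layer at its fixed input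
  have hval : ∀ i : Fin n, f i (x i) = x (i + 1) := by
    intro i
    rw [hf i, hself i, mul_one, hinterp i, one_smul]
  -- derivative of each layer
  have key : ∀ i : Fin n, HasFDerivAt (f i)
      ((c i) • ((innerSL ℝ (x i)).smulRight (x (i + 1)))) (x i) := by
    intro i
    have h1 : HasFDerivAt (fun z : EuclideanSpace ℝ (Fin k0) => (inner ℝ (x i) z : ℝ))
        (innerSL ℝ (x i)) (x i) := (innerSL ℝ (x i)).hasFDerivAt
    have h2 : HasFDerivAt (fun z : EuclideanSpace ℝ (Fin k0) => β i * (inner ℝ (x i) z : ℝ))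
        ((β i) • innerSL ℝ (x i)) (x i) := h1.const_mul (β i)
    have h3 : HasDerivAt φ (deriv φ (β i * (inner ℝ (x i) (x i) : ℝ)))
        (β i * (inner ℝ (x i) (x i) : ℝ)) :=
      ((hφ.differentiable (by simp)) _).hasDerivAt
    have h4 := h3.comp_hasFDerivAt (x i) h2
    have h5 := (h4.const_mul ((k : ℝ) * α i)).smul_const (x (i + 1))
    have hfun : f i = fun z : EuclideanSpace ℝ (Fin k0) =>
        ((k : ℝ) * α i *
          (φ ∘ fun z : EuclideanSpace ℝ (Fin k0) => β i * (inner ℝ (x i) z : ℝ)) z) • x (i + 1) := by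
      funext z; rw [hf i]; rfl
    rw [← hfun] at h5
    have hkα : (k : ℝ) * α i = 1 / φ (β i) := by
      have h := hinterp i
      field_simp [hφβ i]
      linarith
    have hD : ((((k : ℝ) * α i) • (deriv φ (β i * (inner ℝ (x i) (x i) : ℝ)) •
          ((β i) • innerSL ℝ (x i)))).smulRight (x (i + 1)))
        = (c i) • ((innerSL ℝ (x i)).smulRight (x (i + 1))) := by
      refine ContinuousLinearMap.ext fun z => ?_
      simp only [ContinuousLinearMap.smulRight_apply, ContinuousLinearMap.smul_apply,
        innerSL_apply_apply, smul_eq_mul, hself i, mul_one, smul_smul]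
      congr 1
      rw [hc i, hkα]
      ring
    rw [hD] at h5
    exact h5
  -- the iterated composition
  have hFe : F = iterCompAux (fun m => f ((m : ℕ) : Fin n)) n := by
    rw [hF, ← foldl_ofFn_take_eq_iterCompAux f n le_rfl]
    congr 1
    rw [List.take_of_length_le (by simp)]
  set cf : ℕ → EuclideanSpace ℝ (Fin k0) → EuclideanSpace ℝ (Fin k0) :=
    fun m => f ((m : ℕ) : Fin n) with hcf
  have main : ∀ m : ℕ, m < n →
      iterCompAux cf (m + 1) (x 0) = x ((m + 1 : ℕ) : Fin n) ∧
      HasFDerivAt (iterCompAux cf (m + 1))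
        ((∏ i ∈ Finset.range (m + 1), c ((i : ℕ) : Fin n)) •
          ((innerSL ℝ (x 0)).smulRight (x ((m + 1 : ℕ) : Fin n)))) (x 0) := by
    intro m
    induction m with
    | zero =>
      intro _
      constructor
      · show f ((0 : ℕ) : Fin n) (x 0) = x ((1 : ℕ) : Fin n)
        rw [Nat.cast_zero, Nat.cast_one, hval 0, zero_add]
      · have h0 := key 0
        have heq : iterCompAux cf 1 = f ((0 : ℕ) : Fin n) := by
          funext z; rfl
        rw [heq, Nat.cast_zero]
        simpa [Finset.prod_range_one, Nat.cast_one, Nat.cast_zero, zero_add] using h0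
    | succ m ih =>
      intro hm
      obtain ⟨ihv, ihd⟩ := ih (lt_trans (Nat.lt_succ_self m) hm)
      have hcast : ((m + 1 + 1 : ℕ) : Fin n) = ((m + 1 : ℕ) : Fin n) + 1 := by
        push_cast
        ring
      have hcomp : iterCompAux cf (m + 2) = f ((m + 1 : ℕ) : Fin n) ∘ iterCompAux cf (m + 1) := rfl
      constructor
      · show iterCompAux cf (m + 2) (x 0) = x ((m + 1 + 1 : ℕ) : Fin n)
        rw [hcomp, Function.comp_apply, ihv, hval, hcast]
      · have hd := key ((m + 1 : ℕ) : Fin n)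
        rw [← ihv] at hd
        have hcomp' := hd.comp (x 0) ihd
        rw [← hcomp, ihv] at hcomp'
        have hCLM : ((c ((m + 1 : ℕ) : Fin n)) •
              ((innerSL ℝ (x ((m + 1 : ℕ) : Fin n))).smulRight
                (x (((m + 1 : ℕ) : Fin n) + 1)))).comp
              ((∏ i ∈ Finset.range (m + 1), c ((i : ℕ) : Fin n)) •
                ((innerSL ℝ (x 0)).smulRight (x ((m + 1 : ℕ) : Fin n))))
            = (∏ i ∈ Finset.range (m + 1 + 1), c ((i : ℕ) : Fin n)) •
                ((innerSL ℝ (x 0)).smulRight (x ((m + 1 + 1 : ℕ) : Fin n))) := by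
          rw [hcast]
          refine ContinuousLinearMap.ext fun z => ?_
          simp only [ContinuousLinearMap.comp_apply, ContinuousLinearMap.smul_apply,
            ContinuousLinearMap.smulRight_apply, innerSL_apply_apply, smul_eq_mul,
            inner_smul_right, hself, mul_one, smul_smul]
          congr 1
          rw [show (∏ i ∈ Finset.range (m + 1 + 1), c ((i : ℕ) : Fin n))
              = (∏ i ∈ Finset.range (m + 1), c ((i : ℕ) : Fin n)) * c ((m + 1 : ℕ) : Fin n)
            from Finset.prod_range_succ _ _]
          ring
        rw [hCLM] at hcomp'
        exact hcomp'
  -- specialize at m = n - 1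
  have hn : n - 1 + 1 = n := Nat.succ_pred_eq_of_pos (NeZero.pos n)
  obtain ⟨hvF, hdF⟩ := main (n - 1) (by omega)
  rw [hn] at hvF hdF
  have hxn : ((n : ℕ) : Fin n) = 0 := Fin.natCast_self n
  rw [hxn] at hvF hdF
  have hprod : (∏ i ∈ Finset.range n, c ((i : ℕ) : Fin n)) = ∏ i, c i := by
    rw [← Fin.prod_univ_eq_prod_range (fun i => c ((i : ℕ) : Fin n)) n]
    apply Finset.prod_congr rfl
    intro i _
    congr 1
    simp
  rw [hprod] at hdF
  rw [← hFe] at hvF hdF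
  have hfd : fderiv ℝ F (x 0) = (∏ i, c i) • ((innerSL ℝ (x 0)).smulRight (x 0)) := hdF.fderiv
  have happ : ∀ z, fderiv ℝ F (x 0) z = ((∏ i, c i) * (inner ℝ (x 0) z : ℝ)) • x 0 := by
    intro z
    rw [hfd]
    simp [ContinuousLinearMap.smul_apply, ContinuousLinearMap.smulRight_apply,
      innerSL_apply_apply, smul_smul]
  have hx0ne : x 0 ≠ 0 := by
    intro h
    have h1 := hx 0
    rw [h, norm_zero] at h1
    norm_num at h1
  refine ⟨hvF, happ, ?_, ?_⟩
  · apply Module.End.hasEigenvalue_of_hasEigenvector (x := x 0)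
    refine ⟨Module.End.mem_eigenspace_iff.mpr ?_, hx0ne⟩
    show fderiv ℝ F (x 0) (x 0) = (∏ i, c i) • x 0
    rw [happ, hself 0, mul_one]
  · intro μ hμ
    obtain ⟨v, hv⟩ := hμ.exists_hasEigenvector
    have hAv : fderiv ℝ F (x 0) v = μ • v := hv.apply_eq_smul
    rw [happ] at hAv
    by_cases h0 : (inner ℝ (x 0) v : ℝ) = 0
    · have hz : μ • v = 0 := by rw [← hAv, h0, mul_zero, zero_smul]
      have hμ0 : μ = 0 := by
        rcases smul_eq_zero.mp hz with h | h
        · exact h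
        · exact absurd h hv.right
      rw [hμ0, abs_zero]
      exact abs_nonneg _
    · have h1 : (∏ i, c i) * (inner ℝ (x 0) v : ℝ) = μ * (inner ℝ (x 0) v : ℝ) := by
        have h2 := congrArg (fun w => (inner ℝ (x 0) w : ℝ)) hAv
        simpa [inner_smul_right, hself 0, hx 0] using h2
      have hμP : (∏ i, c i) = μ := mul_right_cancel₀ h0 h1
      rw [← hμP]
end

section
/- Let φ(z) = 1/(1+e^{−z}) (the sigmoid). The pair of equations (u² − 1)/2 = ∫_1^v 1/(1 − φ(z)) dz and u·φ(v) = 1/2 (corresponding to width k = 2 and initialization u₀ = v₀ = 1) has a solution (u, v) with u > 0, v > 0, and the quantity φ'(v)v/φ(v) at this solution is strictly less than 1. -/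
/-!
The integrand is `1 / (1 - φ z) = 1 + exp z`, so the first equation reads
`(u² - 1) / 2 = (v - 1) + (exp v - e)`. Eliminating `u = (1 + exp (-v)) / 2` through the second
equation leaves a single equation in `v`, which has a root in `(0, 1)` by the intermediate value
theorem. Since `φ' = φ (1 - φ)`, the quantity `φ'(v) v / φ(v)` equals `v / (1 + exp v)`, which is
below `1` for every `v` because `v < 1 + v ≤ exp v`.
-/

open Real Set

lemma one_div_one_add_exp_neg (x : ℝ) : 1 / (1 + exp (-x)) = sigmoid x := by
  rw [one_div, sigmoid_def]

lemma one_sub_sigmoid (x : ℝ) : 1 - sigmoid x = (1 + exp x)⁻¹ := by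
  rw [← sigmoid_neg, sigmoid_def, neg_neg]

lemma one_div_one_sub_sigmoid (x : ℝ) : 1 / (1 - sigmoid x) = 1 + exp x := by
  rw [one_sub_sigmoid, one_div, inv_inv]

lemma integral_one_div_one_sub_sigmoid (a b : ℝ) :
    ∫ z in a..b, 1 / (1 - sigmoid z) = (b - a) + (exp b - exp a) := by
  simp only [one_div_one_sub_sigmoid]
  rw [intervalIntegral.integral_add intervalIntegrable_const
    (continuous_exp.intervalIntegrable a b), intervalIntegral.integral_const, integral_exp,
    smul_eq_mul, mul_one]

lemma deriv_sigmoid_mul_div_sigmoid (x : ℝ) :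
    deriv sigmoid x * x / sigmoid x = (1 - sigmoid x) * x := by
  rw [deriv_sigmoid]
  field_simp [(sigmoid_pos x).ne']

lemma one_sub_sigmoid_mul_self_lt_one (x : ℝ) : (1 - sigmoid x) * x < 1 := by
  have hpos : 0 < 1 + exp x := by positivity
  rw [one_sub_sigmoid, inv_mul_lt_iff₀ hpos, mul_one]
  linarith [add_one_le_exp x]

lemma exists_mem_Ioo_sigmoid_autoencoder_eq :
    ∃ v ∈ Ioo (0 : ℝ) 1,
      (((1 + exp (-v)) / 2) ^ 2 - 1) / 2 = (v - 1) + (exp v - exp 1) := by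
  set g : ℝ → ℝ := fun v => (((1 + exp (-v)) / 2) ^ 2 - 1) / 2 - ((v - 1) + (exp v - exp 1))
  have hg : ContinuousOn g (Icc 0 1) := by fun_prop
  have hg0 : 0 < g 0 := by simp [g, exp_pos]
  have hg1 : g 1 < 0 := by
    simp only [g]
    nlinarith [exp_pos (-1), exp_neg_one_lt_half]
  obtain ⟨v, hv, hgv⟩ := intermediate_value_Ioo' zero_le_one hg ⟨hg1, hg0⟩
  exact ⟨v, hv, sub_eq_zero.mp hgv⟩

theorem sigmoid_autoencoder_solution_is_attractor :
    ∃ u v : ℝ, 0 < u ∧ 0 < v ∧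
      (u ^ 2 - 1) / 2 = (∫ z in (1 : ℝ)..v, 1 / (1 - 1 / (1 + Real.exp (-z)))) ∧
      u * (1 / (1 + Real.exp (-v))) = 1 / 2 ∧
      deriv (fun z => 1 / (1 + Real.exp (-z))) v * v / (1 / (1 + Real.exp (-v))) < 1 := by
  simp only [one_div_one_add_exp_neg, integral_one_div_one_sub_sigmoid,
    deriv_sigmoid_mul_div_sigmoid]
  obtain ⟨v, ⟨hv0, -⟩, hv⟩ := exists_mem_Ioo_sigmoid_autoencoder_eq
  refine ⟨(1 + exp (-v)) / 2, v, by positivity, hv0, hv, ?_, one_sub_sigmoid_mul_self_lt_one v⟩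
  rw [sigmoid_def]
  field_simp
end
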